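/- Let q be a finite-dimensional Lie algebra over a field k of characteristic 0. For any linear form ξ ∈ q*, the stabilizer q_ξ is a Lie subalgebra of q and ind q_ξ ≥ ind q. -/

import Mathlib

open Module

section Defs

variable (k : Type*) [Field k]

/-- The stabiliser `q_ξ = {x ∈ q | ξ ⁅x, y⁆ = 0 for all y}` of a linear form `ξ ∈ q*`. -/
def lieStab (q : Type*) [LieRing q] [LieAlgebra k q] (ξ : Module.Dual k q) :
    Submodule k q where
  carrier := {x : q | ∀ y : q, ξ ⁅x, y⁆ = 0}
  add_mem' := by
    intro a b ha hb y
    rw [add_lie, map_add, ha y, hb y, add_zero]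
  zero_mem' := by
    intro y
    rw [zero_lie, map_zero]
  smul_mem' := by
    intro c a ha y
    rw [smul_lie, map_smul, ha y, smul_zero]

/-- The index of a Lie algebra: the minimal dimension of the stabiliser of a linear form. -/
noncomputable def lieIndex (q : Type*) [LieRing q] [LieAlgebra k q] : ℕ :=
  ⨅ ξ : Module.Dual k q, Module.finrank k ↥(lieStab k q ξ)

end Defs

/-!
Extend `η ∈ (q_ξ)*` to `η' ∈ q*` and consider the pencil of linear maps
`x ↦ ((ξ + c η') ⁅x, ·⁆, η' ⁅x, ·⁆ |_{q_ξ})`. At `c = 0` its kernel is the stabiliser `(q_ξ)_η`;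
for `c ≠ 0` the second component is implied by the first (as `ξ ⁅x, q_ξ⁆ = 0` for all `x`), so the
kernel is the stabiliser `q_{ξ + c η'}`. The dimension of the kernel of a pencil `M + c N` is at
most `dim ker M` for all but finitely many `c`, and `k` is infinite, so some `c ≠ 0` gives
`ind q ≤ dim q_{ξ + c η'} ≤ dim (q_ξ)_η`.
-/

section Pencil

variable {k V U : Type*} [Field k] [AddCommGroup V] [Module k V] [AddCommGroup U] [Module k U]

lemma exists_ne_zero_disjoint_ker_add_smul [Infinite k] {W : Submodule k V}
    [FiniteDimensional k W] (M N : V →ₗ[k] U) (hW : Disjoint W (LinearMap.ker M)) :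
    ∃ c : k, c ≠ 0 ∧ Disjoint W (LinearMap.ker (M + c • N)) := by
  have hinj : Function.Injective (M ∘ₗ W.subtype) := by
    rw [← LinearMap.ker_eq_bot, LinearMap.ker_comp, ← Submodule.disjoint_iff_comap_eq_bot]
    exact hW
  let e := LinearEquiv.ofInjective _ hinj
  obtain ⟨π, hπ⟩ := (LinearMap.range (M ∘ₗ W.subtype)).subtype.exists_leftInverse_of_injective
    (Submodule.ker_subtype _)
  -- `π ∘ (M + c • N)` on `W` is `e ∘ (1 + c • B)`, injective unless `-c⁻¹` is an eigenvalue of `B`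
  let B : Module.End k W := e.symm.toLinearMap ∘ₗ π ∘ₗ N ∘ₗ W.subtype
  obtain ⟨t, ht⟩ := (B.finite_hasEigenvalue.insert 0).exists_notMem
  simp only [Set.mem_insert_iff, Set.mem_ofPred_eq, not_or] at ht
  refine ⟨-t⁻¹, by simpa using ht.1, Submodule.disjoint_def.mpr fun w hwW hwK => ?_⟩
  have hN : N w = t • M w := by
    have : M w + (-t⁻¹) • N w = 0 := hwK
    rw [neg_smul, add_neg_eq_zero, eq_inv_smul_iff₀ ht.1] at this
    exact this.symm
  have hB : B ⟨w, hwW⟩ = t • ⟨w, hwW⟩ := by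
    have : π (M w) = e ⟨w, hwW⟩ := LinearMap.congr_fun hπ (e ⟨w, hwW⟩)
    simp [B, hN, this]
  by_contra hw
  exact ht.2 (Module.End.hasEigenvalue_of_hasEigenvector
    ⟨Module.End.mem_eigenspace_iff.mpr hB, by simpa using hw⟩)

lemma exists_ne_zero_finrank_ker_add_smul_le [Infinite k] [FiniteDimensional k V]
    (M N : V →ₗ[k] U) :
    ∃ c : k, c ≠ 0 ∧ finrank k (LinearMap.ker (M + c • N)) ≤ finrank k (LinearMap.ker M) := by
  obtain ⟨W, hW⟩ := (LinearMap.ker M).exists_isCompl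
  obtain ⟨c, hc, hdisj⟩ := exists_ne_zero_disjoint_ker_add_smul M N hW.symm.disjoint
  refine ⟨c, hc, ?_⟩
  have := Submodule.finrank_add_finrank_le_of_disjoint hdisj
  have := Submodule.finrank_add_eq_of_isCompl hW
  omega

end Pencil

section Kirillov

variable {k q : Type*} [Field k] [LieRing q] [LieAlgebra k q]

noncomputable def kirillovForm (ξ : Dual k q) : LinearMap.BilinForm k q :=
  (LieModule.toEnd k q q : q →ₗ[k] Module.End k q).compr₂ ξ

@[simp] lemma kirillovForm_apply (ξ : Dual k q) (x y : q) : kirillovForm ξ x y = ξ ⁅x, y⁆ := rfl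

lemma lieStab_eq_ker_kirillovForm (ξ : Dual k q) :
    lieStab k q ξ = LinearMap.ker (kirillovForm ξ) := by
  ext x
  exact ⟨fun h => LinearMap.ext h, fun h => LinearMap.congr_fun h⟩

def lieStabSubalgebra (ξ : Dual k q) : LieSubalgebra k q :=
  { lieStab k q ξ with
    lie_mem' := fun {x y} hx hy z => by
      rw [lie_lie, map_sub, hx ⁅y, z⁆, hy ⁅x, z⁆, sub_zero] }

lemma mem_lieStabSubalgebra {ξ : Dual k q} {x : q} :
    x ∈ lieStabSubalgebra ξ ↔ ∀ y, ξ ⁅x, y⁆ = 0 := Iff.rfl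

variable {ξ : Dual k q}

noncomputable def kirillovFormRestrict (ξ η : Dual k q) : q →ₗ[k] Dual k (lieStabSubalgebra ξ) :=
  (lieStabSubalgebra ξ).toSubmodule.subtype.dualMap ∘ₗ kirillovForm η

lemma ker_kirillovForm_add_smul_prod_restrict {η : Dual k q} {c : k} (hc : c ≠ 0) :
    LinearMap.ker ((kirillovForm (ξ + c • η)).prod (kirillovFormRestrict ξ η)) =
      lieStab k q (ξ + c • η) := by
  rw [LinearMap.ker_prod, lieStab_eq_ker_kirillovForm, inf_eq_left]
  intro x hx
  ext ⟨y, hy⟩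
  have := LinearMap.congr_fun hx y
  have hξ : ξ ⁅x, y⁆ = 0 := by
    rw [← lie_skew, map_neg, mem_lieStabSubalgebra.mp hy x, neg_zero]
  simp only [LinearMap.add_apply, LinearMap.smul_apply, kirillovForm_apply, hξ, zero_add,
    smul_eq_mul] at this
  exact (mul_eq_zero.mp this).resolve_left hc

lemma ker_kirillovForm_prod_restrict {η : Dual k (lieStabSubalgebra ξ)} {η' : Dual k q}
    (hη : η' ∘ₗ (lieStabSubalgebra ξ).toSubmodule.subtype = η) :
    LinearMap.ker ((kirillovForm ξ).prod (kirillovFormRestrict ξ η')) =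
      (lieStab k _ η).map (lieStabSubalgebra ξ).toSubmodule.subtype := by
  ext x
  simp only [LinearMap.ker_prod, ← lieStab_eq_ker_kirillovForm, Submodule.mem_inf,
    LinearMap.mem_ker, Submodule.mem_map, ← hη]
  constructor
  · rintro ⟨hxH, hD⟩
    exact ⟨⟨x, hxH⟩, fun y => LinearMap.congr_fun hD y, rfl⟩
  · rintro ⟨x, hx, rfl⟩
    exact ⟨x.2, LinearMap.ext hx⟩

lemma lieIndex_le_finrank_lieStab (ξ : Dual k q) : lieIndex k q ≤ finrank k (lieStab k q ξ) :=
  ciInf_le (OrderBot.bddBelow _) ξ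

lemma exists_finrank_lieStab_le_of_lieStabSubalgebra [Infinite k] [FiniteDimensional k q]
    (ξ : Dual k q) (η : Dual k (lieStabSubalgebra ξ)) :
    ∃ ζ : Dual k q, finrank k (lieStab k q ζ) ≤ finrank k (lieStab k (lieStabSubalgebra ξ) η) := by
  obtain ⟨η', hη'⟩ := LinearMap.exists_extend η
  obtain ⟨c, hc, hle⟩ := exists_ne_zero_finrank_ker_add_smul_le
    ((kirillovForm ξ).prod (kirillovFormRestrict ξ η')) ((kirillovForm η').prod 0)
  have hpencil : (kirillovForm ξ).prod (kirillovFormRestrict ξ η') + c • (kirillovForm η').prod 0 =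
      (kirillovForm (ξ + c • η')).prod (kirillovFormRestrict ξ η') := by
    ext <;> simp
  rw [hpencil, ker_kirillovForm_add_smul_prod_restrict hc, ker_kirillovForm_prod_restrict hη',
    Submodule.finrank_map_subtype_eq] at hle
  exact ⟨ξ + c • η', hle⟩

end Kirillov

/-- For any linear form `ξ` on a finite-dimensional Lie algebra `q` over a field of
characteristic zero, the stabiliser `q_ξ` is a Lie subalgebra of `q` and
`ind q_ξ ≥ ind q`. -/
theorem lieIndex_stab_ge
    (k : Type*) [Field k] [CharZero k]
    (q : Type*) [LieRing q] [LieAlgebra k q] [FiniteDimensional k q]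
    (ξ : Module.Dual k q) :
    ∃ H : LieSubalgebra k q,
      (H : Set q) = {x : q | ∀ y : q, ξ ⁅x, y⁆ = 0} ∧
      lieIndex k ↥H ≥ lieIndex k q := by
  have : Infinite k := CharZero.infinite k
  refine ⟨lieStabSubalgebra ξ, rfl, le_ciInf fun η => ?_⟩
  obtain ⟨ζ, hζ⟩ := exists_finrank_lieStab_le_of_lieStabSubalgebra ξ η
  exact (lieIndex_le_finrank_lieStab ζ).trans hζ
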